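/- arXiv:2006.14040 — 3 statements merged into one kernel-verified Lean document; each statement's English description precedes it below -/
import Mathlib

section
/- Let C be a unitary in the k-th level C^(k) of the Clifford hierarchy that fixes under conjugation the group Z_N = {E(0,b) : b ∈ F_2^m} of diagonal Paulis (i.e., C Z_N C† = Z_N). Then C = D · E(a, 0) · G_D(P) for some diagonal unitary D ∈ C^(k), some a ∈ F_2^m, and some P ∈ GL(m, F_2), where G_D(P) is the permutation matrix |v⟩ ↦ |vP⟩. -/
open Matrix
open scoped Classical

noncomputable section

abbrev V (m : ℕ) := Fin m → ZMod 2

/-- Integer dot product of two binary vectors (using {0,1} representatives). -/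
def dotN {m : ℕ} (a b : V m) : ℕ := ∑ i, (a i).val * (b i).val

/-- The matrix `D(a,b)` with `D(a,b)|v⟩ = (−1)^{b·v}|v⊕a⟩`. -/
def DM {m : ℕ} (a b : V m) : Matrix (V m) (V m) ℂ :=
  Matrix.of fun u v => if u = v + a then (-1 : ℂ) ^ dotN b v else 0

/-- The Hermitian Pauli `E(a,b) = i^{a·b mod 4} D(a,b)`, for `c = (a,b) ∈ F_2^{2m}`. -/
def EM {m : ℕ} (c : V m × V m) : Matrix (V m) (V m) ℂ :=
  Complex.I ^ dotN c.1 c.2 • DM c.1 c.2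

/-- The Heisenberg–Weyl group `HW_N = {i^k D(a,b)}`, as a set of matrices. -/
def HW (m : ℕ) : Set (Matrix (V m) (V m) ℂ) :=
  {M | ∃ (k : Fin 4) (a b : V m), M = Complex.I ^ (k : ℕ) • DM a b}

/-- A Clifford matrix: a unitary normalizing the Heisenberg–Weyl group. -/
def IsClifford {m : ℕ} (G : Matrix (V m) (V m) ℂ) : Prop :=
  G ∈ Matrix.unitaryGroup (V m) ℂ ∧ ∀ W ∈ HW m, G * W * Gᴴ ∈ HW m

/-- The (Pauli/Weyl) support of a matrix, identified with vectors in `F_2^{2m}`. -/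
def supp {m : ℕ} (M : Matrix (V m) (V m) ℂ) : Set (V m × V m) :=
  {c | Matrix.trace ((EM c)ᴴ * M) ≠ 0}

/-- The symplectic inner product on `F_2^{2m}`. -/
def sympl {m : ℕ} (u v : V m × V m) : ZMod 2 :=
  ∑ i, (u.1 i * v.2 i + u.2 i * v.1 i)

/-- The Clifford hierarchy; `CH m k` is the `(k+1)`-st level `C^(k+1)`, so
`CH m 0 = HW_N = C^(1)` and `C^(3) = CH m 2`. -/
def CH (m : ℕ) : ℕ → Set (Matrix (V m) (V m) ℂ)
  | 0 => HW m
  | k + 1 => {U | U ∈ Matrix.unitaryGroup (V m) ℂ ∧ ∀ W ∈ HW m, U * W * Uᴴ ∈ CH m k}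


/-- The permutation matrix `G_D(P) : |v⟩ ↦ |vP⟩`. -/
def GD {m : ℕ} (P : Matrix (Fin m) (Fin m) (ZMod 2)) : Matrix (V m) (V m) ℂ :=
  Matrix.of fun u v => if u = Matrix.vecMul v P then 1 else 0

/-- `Fix(P) = {v : vP = v}`. -/
def FixS {m : ℕ} (P : Matrix (Fin m) (Fin m) (ZMod 2)) : Set (V m) :=
  {v | Matrix.vecMul v P = v}

/-- `Res(P) = rowspace(I ⊕ P) = {v ⊕ vP : v ∈ F_2^m}`. -/
def ResS {m : ℕ} (P : Matrix (Fin m) (Fin m) (ZMod 2)) : Set (V m) :=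
  {w | ∃ v : V m, w = v + Matrix.vecMul v P}

/-- Euclidean dual with respect to the standard bilinear form on `F_2^m`. -/
def perp {m : ℕ} (A : Set (V m)) : Set (V m) :=
  {w | ∀ v ∈ A, ∑ i, w i * v i = 0}

/-!
Conjugation by `C` permutes the diagonal Paulis: `C E(0,b) = E(0,σ b) C`. Comparing the `(u,v)`
entries, `C u v ≠ 0` forces `v·b = u·σ(b)` for every `b`, which determines `v` from `u`: each row
of `C` is supported at a single point `f u`, and `f` is additive, i.e. `f u = u M`. Unitarity makes
`f` injective, so `M` is invertible. Then `D = C G_D(M)` is diagonal and `C = D G_D(M⁻¹)`. The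
level is preserved because `G_D(M)` normalizes `HW_N`; at the first level `C` is itself a Pauli
`i^j D(a,b)` supported on `v = u + a`, which forces `a = 0` and `M = 1`.
-/

lemma neg_one_pow_eq_neg_one_pow_iff {p q : ℕ} :
    (-1 : ℂ) ^ p = (-1) ^ q ↔ (p : ZMod 2) = q := by
  rw [neg_one_pow_eq_pow_mod_two, neg_one_pow_eq_pow_mod_two (n := q),
    ZMod.natCast_eq_natCast_iff']
  rcases Nat.mod_two_eq_zero_or_one p with hp | hp <;>
    rcases Nat.mod_two_eq_zero_or_one q with hq | hq <;> norm_num [hp, hq]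

lemma natCast_dotN {m : ℕ} (a b : V m) : (dotN a b : ZMod 2) = a ⬝ᵥ b := by
  simp [dotN, dotProduct, ZMod.natCast_val]

lemma neg_one_pow_dotN_eq_iff {m : ℕ} {a b c d : V m} :
    (-1 : ℂ) ^ dotN a b = (-1) ^ dotN c d ↔ a ⬝ᵥ b = c ⬝ᵥ d := by
  rw [neg_one_pow_eq_neg_one_pow_iff, natCast_dotN, natCast_dotN]

lemma EM_zero_eq_diagonal {m : ℕ} (b : V m) :
    EM (0, b) = diagonal fun v => (-1 : ℂ) ^ dotN b v := by
  ext u v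
  by_cases h : u = v <;> simp [EM, DM, dotN, h]

lemma EM_zero_zero {m : ℕ} : EM ((0 : V m), (0 : V m)) = 1 := by
  simp [EM_zero_eq_diagonal, dotN]

lemma exists_vecMul_eq_of_map_add {ι : Type*} [Fintype ι] [DecidableEq ι] {n : ℕ}
    (f : (ι → ZMod n) →+ (ι → ZMod n)) : ∃ M : Matrix ι ι (ZMod n), ∀ u, f u = u ᵥ* M :=
  ⟨(LinearMap.toMatrix' (f.toZModLinearMap n))ᵀ, fun u => by
    rw [vecMul_transpose, LinearMap.toMatrix'_mulVec]; rfl⟩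

section GD

variable {m : ℕ} {Q : Matrix (Fin m) (Fin m) (ZMod 2)}

lemma mul_GD_apply (A : Matrix (V m) (V m) ℂ) (P : Matrix (Fin m) (Fin m) (ZMod 2)) (u w : V m) :
    (A * GD P) u w = A u (w ᵥ* P) := by
  simp [mul_apply, GD]

lemma GD_one : GD (1 : Matrix (Fin m) (Fin m) (ZMod 2)) = 1 := by
  ext u v
  simp [GD, one_apply]

lemma GD_mul_GD (P R : Matrix (Fin m) (Fin m) (ZMod 2)) : GD P * GD R = GD (R * P) := by
  ext u v
  rw [mul_GD_apply]
  simp [GD, vecMul_vecMul]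

lemma eq_vecMul_iff (hQ : IsUnit Q) {u v : V m} : u = v ᵥ* Q ↔ u ᵥ* Q⁻¹ = v := by
  have hd := (isUnit_iff_isUnit_det Q).mp hQ
  constructor
  · rintro rfl
    rw [vecMul_vecMul, mul_nonsing_inv _ hd, vecMul_one]
  · rintro rfl
    rw [vecMul_vecMul, nonsing_inv_mul _ hd, vecMul_one]

lemma GD_mul_apply (hQ : IsUnit Q) (A : Matrix (V m) (V m) ℂ) (u v : V m) :
    (GD Q * A) u v = A (u ᵥ* Q⁻¹) v := by
  simp [mul_apply, GD, eq_vecMul_iff hQ]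

lemma GD_conjTranspose (hQ : IsUnit Q) : (GD Q)ᴴ = GD Q⁻¹ := by
  ext u v
  simp only [conjTranspose_apply, GD, of_apply, eq_vecMul_iff hQ, eq_comm (a := u)]
  split_ifs <;> simp

lemma GD_mem_unitaryGroup (hQ : IsUnit Q) : GD Q ∈ unitaryGroup (V m) ℂ := by
  rw [mem_unitaryGroup_iff, star_eq_conjTranspose, GD_conjTranspose hQ, GD_mul_GD,
    nonsing_inv_mul _ ((isUnit_iff_isUnit_det Q).mp hQ), GD_one]

lemma GD_conj_DM (hQ : IsUnit Q) (a b : V m) :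
    GD Q * DM a b * (GD Q)ᴴ = DM (a ᵥ* Q) (Q⁻¹ *ᵥ b) := by
  have hinj := vecMul_injective_of_isUnit (isUnit_nonsing_inv_iff.mpr hQ)
  have hd := (isUnit_iff_isUnit_det Q).mp hQ
  ext u v
  rw [GD_conjTranspose hQ, mul_GD_apply, GD_mul_apply hQ]
  have hcond : u ᵥ* Q⁻¹ = v ᵥ* Q⁻¹ + a ↔ u = v + a ᵥ* Q := by
    rw [show v ᵥ* Q⁻¹ + a = (v + a ᵥ* Q) ᵥ* Q⁻¹ by
      rw [add_vecMul, vecMul_vecMul, mul_nonsing_inv _ hd, vecMul_one], hinj.eq_iff]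
  have hsign : (-1 : ℂ) ^ dotN b (v ᵥ* Q⁻¹) = (-1) ^ dotN (Q⁻¹ *ᵥ b) v := by
    rw [neg_one_pow_dotN_eq_iff, dotProduct_comm, ← dotProduct_mulVec, dotProduct_comm]
  simp only [DM, of_apply, hcond, hsign]

lemma GD_conj_mem_HW (hQ : IsUnit Q) {W : Matrix (V m) (V m) ℂ} (hW : W ∈ HW m) :
    GD Q * W * (GD Q)ᴴ ∈ HW m := by
  obtain ⟨j, a, b, rfl⟩ := hW
  exact ⟨j, a ᵥ* Q, Q⁻¹ *ᵥ b, by rw [Matrix.mul_smul, Matrix.smul_mul, GD_conj_DM hQ]⟩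

lemma mul_GD_mem_CH_succ {k : ℕ} {C : Matrix (V m) (V m) ℂ} (hQ : IsUnit Q)
    (hC : C ∈ CH m (k + 1)) : C * GD Q ∈ CH m (k + 1) := by
  refine ⟨Submonoid.mul_mem _ hC.1 (GD_mem_unitaryGroup hQ), fun W hW => ?_⟩
  rw [conjTranspose_mul,
    show C * GD Q * W * ((GD Q)ᴴ * Cᴴ) = C * (GD Q * W * (GD Q)ᴴ) * Cᴴ by noncomm_ring]
  exact hC.2 _ (GD_conj_mem_HW hQ hW)

end GD

section Monomial

variable {m : ℕ} {C : Matrix (V m) (V m) ℂ}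

def IsSupportedOnGraph (C : Matrix (V m) (V m) ℂ) (M : Matrix (Fin m) (Fin m) (ZMod 2)) : Prop :=
  ∀ u v, C u v ≠ 0 → v = u ᵥ* M

lemma dotProduct_eq_of_mul_EM_eq {b b' : V m} (h : C * EM (0, b) = EM (0, b') * C) {u v : V m}
    (huv : C u v ≠ 0) : v ⬝ᵥ b = u ⬝ᵥ b' := by
  have huv' := congrFun (congrFun h u) v
  rw [EM_zero_eq_diagonal, EM_zero_eq_diagonal, mul_diagonal, diagonal_mul, mul_comm] at huv'
  rw [dotProduct_comm, dotProduct_comm u]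
  exact neg_one_pow_dotN_eq_iff.mp (mul_right_cancel₀ huv huv')

lemma exists_apply_ne_zero (hU : C ∈ unitaryGroup (V m) ℂ) (u : V m) : ∃ v, C u v ≠ 0 := by
  by_contra! h
  have huu := congrFun (congrFun (mem_unitaryGroup_iff.mp hU) u) u
  simp [mul_apply, h] at huu

lemma injective_of_apply_ne_zero_iff (hU : C ∈ unitaryGroup (V m) ℂ) {f : V m → V m}
    (hf : ∀ u v, C u v ≠ 0 ↔ v = f u) : Function.Injective f := by
  intro u u' h
  by_contra hne
  have huu' := congrFun (congrFun (mem_unitaryGroup_iff.mp hU) u) u'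
  rw [one_apply_ne hne, mul_apply, Finset.sum_eq_single (f u)] at huu'
  · exact mul_ne_zero ((hf u _).2 rfl) (star_ne_zero.2 ((hf u' _).2 h)) huu'
  · intro w _ hw
    rw [show C u w = 0 from not_not.1 (mt (hf u w).1 hw), zero_mul]
  · simp

lemma exists_isUnit_isSupportedOnGraph (hU : C ∈ unitaryGroup (V m) ℂ)
    (hZ : ∀ b, ∃ b', C * EM (0, b) = EM (0, b') * C) :
    ∃ M, IsUnit M ∧ IsSupportedOnGraph C M := by
  choose σ hσ using hZ
  choose f hf using exists_apply_ne_zero hU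
  have hdot {u v : V m} (h : C u v ≠ 0) (b : V m) : v ⬝ᵥ b = u ⬝ᵥ σ b :=
    dotProduct_eq_of_mul_EM_eq (hσ b) h
  have hsupp (u v : V m) : C u v ≠ 0 ↔ v = f u :=
    ⟨fun h => dotProduct_eq _ _ fun b => (hdot h b).trans (hdot (hf u) b).symm,
      by rintro rfl; exact hf u⟩
  have hadd (u u' : V m) : f (u + u') = f u + f u' := dotProduct_eq _ _ fun b => by
    rw [hdot (hf _), add_dotProduct, add_dotProduct, hdot (hf u), hdot (hf u')]
  obtain ⟨M, hM⟩ := exists_vecMul_eq_of_map_add (AddMonoidHom.mk' f hadd)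
  have hfM : f = fun u => u ᵥ* M := funext hM
  refine ⟨M, vecMul_injective_iff_isUnit.mp ?_, fun u v h => ((hsupp u v).1 h).trans (hM u)⟩
  exact hfM ▸ injective_of_apply_ne_zero_iff hU hsupp

lemma IsSupportedOnGraph.isDiag_mul_GD {M : Matrix (Fin m) (Fin m) (ZMod 2)}
    (hsupp : IsSupportedOnGraph C M) (hM : IsUnit M) : (C * GD M).IsDiag := by
  intro u w hne
  rw [mul_GD_apply]
  by_contra h
  exact hne (vecMul_injective_of_isUnit hM (hsupp u _ h)).symm

lemma IsSupportedOnGraph.eq_one_of_mem_HW {M : Matrix (Fin m) (Fin m) (ZMod 2)}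
    (hsupp : IsSupportedOnGraph C M) (hC : C ∈ HW m) : M = 1 := by
  obtain ⟨j, a, b, rfl⟩ := hC
  have haa : a + a = 0 := funext fun i => CharTwo.add_self_eq_zero (a i)
  have hshift (u : V m) : u ᵥ* M = u + a :=
    (hsupp u (u + a) (by simp [DM, add_assoc, haa])).symm
  have ha : a = 0 := by simpa [eq_comm] using hshift 0
  exact ext_iff_vecMul.mpr fun u => by rw [hshift, ha, add_zero, vecMul_one]

lemma IsSupportedOnGraph.mul_GD_mem_CH {M : Matrix (Fin m) (Fin m) (ZMod 2)}
    (hsupp : IsSupportedOnGraph C M) (hM : IsUnit M) : ∀ {k}, C ∈ CH m k → C * GD M ∈ CH m k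
  | 0, hC => by rwa [hsupp.eq_one_of_mem_HW hC, GD_one, Matrix.mul_one]
  | _ + 1, hC => mul_GD_mem_CH_succ hM hC

end Monomial

theorem stmt10_general {m : ℕ} (k : ℕ) (C : Matrix (V m) (V m) ℂ)
    (hU : C ∈ Matrix.unitaryGroup (V m) ℂ) (hC : C ∈ CH m k)
    (hfix : (fun W => C * W * Cᴴ) '' {M : Matrix (V m) (V m) ℂ | ∃ b : V m, M = EM (0, b)} =
      {M : Matrix (V m) (V m) ℂ | ∃ b : V m, M = EM (0, b)}) :
    ∃ (D : Matrix (V m) (V m) ℂ) (a : V m) (P : Matrix (Fin m) (Fin m) (ZMod 2)),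
      D.IsDiag ∧ D ∈ CH m k ∧ IsUnit P ∧ C = D * EM (a, 0) * GD P := by
  have hZ (b : V m) : ∃ b', C * EM (0, b) = EM (0, b') * C := by
    obtain ⟨b', hb'⟩ : C * EM (0, b) * Cᴴ ∈ {M | ∃ b : V m, M = EM (0, b)} :=
      hfix ▸ Set.mem_image_of_mem _ ⟨b, rfl⟩
    refine ⟨b', ?_⟩
    rw [← hb', Matrix.mul_assoc _ Cᴴ, ← star_eq_conjTranspose, mem_unitaryGroup_iff'.mp hU,
      Matrix.mul_one]
  obtain ⟨M, hM, hsupp⟩ := exists_isUnit_isSupportedOnGraph hU hZ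
  -- `hfix` is sign-free: `E(a,0)` would flip the signs of some `E(0,b)`, so the factor is trivial.
  refine ⟨C * GD M, 0, M⁻¹, hsupp.isDiag_mul_GD hM, hsupp.mul_GD_mem_CH hM hC,
    isUnit_nonsing_inv_iff.mpr hM, ?_⟩
  rw [EM_zero_zero, Matrix.mul_one, Matrix.mul_assoc, GD_mul_GD,
    nonsing_inv_mul _ ((isUnit_iff_isUnit_det M).mp hM), GD_one, Matrix.mul_one]

/-- if a unitary `C` in a level `C^(k)` of the Clifford hierarchy fixes
under conjugation the group `Z_N = {E(0,b)}` of diagonal Paulis, then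
`C = D · E(a,0) · G_D(P)` with `D` a diagonal element of `C^(k)`, `a ∈ F₂^m`,
`P ∈ GL(m,F₂)`.  (Here `CH m k` denotes the level `C^(k+1)`.) -/
theorem stmt10 {m : ℕ} (hm : 1 ≤ m) (k : ℕ) (C : Matrix (V m) (V m) ℂ)
    (hU : C ∈ Matrix.unitaryGroup (V m) ℂ) (hC : C ∈ CH m k)
    (hfix : (fun W => C * W * Cᴴ) '' {M : Matrix (V m) (V m) ℂ | ∃ b : V m, M = EM (0, b)} =
      {M : Matrix (V m) (V m) ℂ | ∃ b : V m, M = EM (0, b)}) :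
    ∃ (D : Matrix (V m) (V m) ℂ) (a : V m) (P : Matrix (Fin m) (Fin m) (ZMod 2)),
      D.IsDiag ∧ D ∈ CH m k ∧ IsUnit P ∧ C = D * EM (a, 0) * GD P :=
  stmt10_general k C hU hC hfix
end
end

section
/- Let C be a unitary matrix and S a maximal commutative subgroup of the Pauli group. Then C fixes S pointwise (C E C† = E for all E ∈ S) if and only if supp(C) ⊆ S. -/
open Matrix
open scoped Classical

noncomputable section

/-! The Paulis `E(c)` are Hermitian involutions that commute up to the sign `(-1)^⟨u,v⟩_s`, and
every matrix expands as `2^m M = ∑_c tr(E(c)† M) E(c)`. Multiplying this expansion by `E(v)` on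
either side changes the coefficient of `E(c)` by `(-1)^⟨c,v⟩_s`, so `M` commutes with `E(v)`
exactly when `v` is symplectically orthogonal to `supp M`. For a unitary `C`, fixing `E(v)` under
conjugation is commuting with it, and a maximal isotropic `J` is its own orthogonal complement. -/

namespace ZModModule

variable {G : Type*} [AddCommGroup G] [Module (ZMod 2) G]

lemma eq_add_comm_iff (u v a : G) : u = v + a ↔ v = u + a := by
  constructor <;> rintro rfl <;> rw [add_assoc, add_self, add_zero]

lemma eq_add_iff_eq_add (u v a : G) : u = v + a ↔ a = u + v := by
  rw [eq_add_comm_iff, add_comm u a, eq_add_comm_iff, add_comm v u]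

end ZModModule

lemma zmod_two_eq_zero_or_one (x : ZMod 2) : x = 0 ∨ x = 1 := by
  revert x; decide

namespace Pauli

variable {m : ℕ}

def sgn (x : ZMod 2) : ℂ := (-1) ^ x.val

@[simp] lemma sgn_zero : sgn 0 = 1 := rfl

@[simp] lemma sgn_one : sgn 1 = -1 := by simp [sgn, ZMod.val_one]

lemma sgn_add (x y : ZMod 2) : sgn (x + y) = sgn x * sgn y := by
  rw [sgn, ZMod.val_add, ← neg_one_pow_eq_pow_mod_two, pow_add, sgn, sgn]

lemma sgn_mul_self (x : ZMod 2) : sgn x * sgn x = 1 := by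
  rw [← sgn_add, ZModModule.add_self, sgn_zero]

@[simp] lemma star_sgn (x : ZMod 2) : star (sgn x) = sgn x := by
  simp [sgn]

lemma sgn_eq_one_iff {x : ZMod 2} : sgn x = 1 ↔ x = 0 := by
  rcases zmod_two_eq_zero_or_one x with rfl | rfl <;> norm_num

lemma neg_one_pow_dotN (a b : V m) : (-1 : ℂ) ^ dotN a b = sgn (a ⬝ᵥ b) := by
  have hcast : ((dotN a b : ℕ) : ZMod 2) = a ⬝ᵥ b := by
    simp [dotN, dotProduct, ZMod.natCast_val]
  rw [sgn, ← hcast, ZMod.val_natCast, ← neg_one_pow_eq_pow_mod_two]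

lemma I_pow_dotN_mul_self (a b : V m) :
    Complex.I ^ dotN a b * Complex.I ^ dotN a b = sgn (a ⬝ᵥ b) := by
  rw [← neg_one_pow_dotN, ← mul_pow, Complex.I_mul_I]

lemma sum_sgn_dotProduct (w : V m) :
    ∑ b : V m, sgn (b ⬝ᵥ w) = if w = 0 then ((2 ^ m : ℕ) : ℂ) else 0 := by
  split_ifs with hw
  · simp [hw]
  obtain ⟨i, hi⟩ := Function.ne_iff.mp hw
  have hwi : w i = 1 := (zmod_two_eq_zero_or_one (w i)).resolve_left hi
  have hshift : ∀ b : V m, sgn ((b + Pi.single i 1) ⬝ᵥ w) = - sgn (b ⬝ᵥ w) := by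
    intro b
    rw [add_dotProduct, single_dotProduct, hwi, one_mul, sgn_add, sgn_one, mul_neg_one]
  have hneg := Equiv.sum_comp (Equiv.addRight (Pi.single i 1 : V m)) (fun b => sgn (b ⬝ᵥ w))
  simp only [Equiv.coe_addRight, hshift, Finset.sum_neg_distrib] at hneg
  linear_combination -hneg / 2

lemma DM_apply (a b u v : V m) : DM a b u v = if u = v + a then sgn (b ⬝ᵥ v) else 0 := by
  rw [DM, of_apply, neg_one_pow_dotN]

lemma DM_zero_zero : DM (0 : V m) 0 = 1 := by
  ext u v
  simp [DM_apply, one_apply]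

lemma DM_mul_DM (a b a' b' : V m) :
    DM a b * DM a' b' = sgn (b ⬝ᵥ a') • DM (a + a') (b + b') := by
  ext x y
  rw [mul_apply, Finset.sum_eq_single (y + a') (fun z _ hz => by simp [DM_apply, hz]) (by simp),
    Matrix.smul_apply, DM_apply, DM_apply, DM_apply, if_pos rfl, ← add_assoc, add_right_comm]
  split_ifs
  · rw [dotProduct_add, add_dotProduct, sgn_add, sgn_add, smul_eq_mul]; ring
  · simp

lemma conjTranspose_DM (a b : V m) : (DM a b)ᴴ = sgn (b ⬝ᵥ a) • DM a b := by
  ext u v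
  simp only [conjTranspose_apply, Matrix.smul_apply, DM_apply, ZModModule.eq_add_comm_iff v]
  split_ifs with h
  · subst h
    rw [dotProduct_add, sgn_add, smul_eq_mul, star_mul', star_sgn, star_sgn, mul_comm]
  · simp

lemma trace_conjTranspose_DM_mul (a b : V m) (M : Matrix (V m) (V m) ℂ) :
    trace ((DM a b)ᴴ * M) = ∑ u, sgn (b ⬝ᵥ u) * M (u + a) u := by
  simp only [trace, diag_apply, mul_apply, conjTranspose_apply, DM_apply, apply_ite star,
    star_sgn, star_zero, ite_mul, zero_mul, Finset.sum_ite_eq', Finset.mem_univ, if_true]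

lemma sum_trace_conjTranspose_DM_mul_smul_DM (M : Matrix (V m) (V m) ℂ) :
    ∑ a, ∑ b, trace ((DM a b)ᴴ * M) • DM a b = ((2 ^ m : ℕ) : ℂ) • M := by
  ext x y
  have hDM : ∀ a b, DM a b x y = if a = x + y then sgn (b ⬝ᵥ y) else 0 := fun a b => by
    rw [DM_apply]
    exact if_congr (ZModModule.eq_add_iff_eq_add x y a) rfl rfl
  have hchar : ∀ u, ∑ b : V m, sgn (b ⬝ᵥ u) * sgn (b ⬝ᵥ y) =
      if u = y then ((2 ^ m : ℕ) : ℂ) else 0 := fun u => by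
    simp only [← sgn_add, ← dotProduct_add, sum_sgn_dotProduct]
    exact if_congr (by rw [add_eq_zero_iff_eq_neg, ZModModule.neg_eq_self]) rfl rfl
  simp only [Matrix.sum_apply, Matrix.smul_apply, smul_eq_mul, trace_conjTranspose_DM_mul, hDM,
    mul_ite, mul_zero]
  rw [Fintype.sum_eq_single (x + y) (fun a ha => by simp [ha])]
  simp only [if_true, Finset.sum_mul]
  rw [Finset.sum_comm]
  simp only [mul_right_comm _ (M _ _), ← Finset.sum_mul, hchar, ite_mul, zero_mul,
    Finset.sum_ite_eq', Finset.mem_univ, if_true]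
  rw [add_left_comm, ZModModule.add_self, add_zero]

lemma sympl_mk (a b a' b' : V m) : sympl (a, b) (a', b') = a ⬝ᵥ b' + b ⬝ᵥ a' := by
  simp only [sympl, dotProduct, Finset.sum_add_distrib]

lemma sympl_comm (u v : V m × V m) : sympl u v = sympl v u := by
  rw [sympl_mk, sympl_mk, dotProduct_comm u.1, dotProduct_comm u.2, add_comm]

lemma EM_mul_EM (a b a' b' : V m) :
    EM (a, b) * EM (a', b') =
      (Complex.I ^ dotN a b * Complex.I ^ dotN a' b' * sgn (b ⬝ᵥ a')) •
        DM (a + a') (b + b') := by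
  rw [EM, EM, smul_mul_smul_comm, DM_mul_DM, smul_smul]

lemma EM_mul_EM_comm (u v : V m × V m) : EM u * EM v = sgn (sympl u v) • (EM v * EM u) := by
  obtain ⟨a, b⟩ := u
  obtain ⟨a', b'⟩ := v
  rw [EM_mul_EM, EM_mul_EM, smul_smul, add_comm a', add_comm b', sympl_mk, sgn_add,
    dotProduct_comm b' a]
  congr 1
  linear_combination (-(Complex.I ^ dotN a b * Complex.I ^ dotN a' b' * sgn (b ⬝ᵥ a'))) *
    sgn_mul_self (a ⬝ᵥ b')

lemma EM_mul_self (c : V m × V m) : EM c * EM c = 1 := by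
  rw [EM_mul_EM, ZModModule.add_self, ZModModule.add_self, DM_zero_zero, I_pow_dotN_mul_self,
    dotProduct_comm c.2, sgn_mul_self, one_smul]

lemma star_I_pow_mul_self (n : ℕ) : star (Complex.I ^ n) * Complex.I ^ n = 1 := by
  rw [star_pow, ← mul_pow, Complex.star_def, Complex.conj_I, neg_mul, Complex.I_mul_I, neg_neg,
    one_pow]

lemma conjTranspose_EM (c : V m × V m) : (EM c)ᴴ = EM c := by
  rw [EM, conjTranspose_smul, conjTranspose_DM, smul_smul, dotProduct_comm,
    ← I_pow_dotN_mul_self, ← mul_assoc, star_I_pow_mul_self, one_mul]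

lemma sum_trace_conjTranspose_EM_mul_smul_EM (M : Matrix (V m) (V m) ℂ) :
    ∑ c, trace ((EM c)ᴴ * M) • EM c = ((2 ^ m : ℕ) : ℂ) • M := by
  rw [Fintype.sum_prod_type, ← sum_trace_conjTranspose_DM_mul_smul_DM]
  refine Finset.sum_congr rfl fun a _ => Finset.sum_congr rfl fun b _ => ?_
  rw [EM, conjTranspose_smul, smul_mul_assoc, trace_smul, smul_smul, smul_eq_mul]
  congr 1
  linear_combination trace ((DM a b)ᴴ * M) * star_I_pow_mul_self (dotN a b)

lemma mem_supp_iff {M : Matrix (V m) (V m) ℂ} {c : V m × V m} :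
    c ∈ supp M ↔ trace ((EM c)ᴴ * M) ≠ 0 :=
  Iff.rfl

lemma sympl_eq_zero_of_commute_of_mem_supp {M : Matrix (V m) (V m) ℂ} {v c : V m × V m}
    (hv : Commute (EM v) M) (hc : c ∈ supp M) : sympl v c = 0 := by
  rw [mem_supp_iff, conjTranspose_EM] at hc
  have hsign : trace (EM c * M) = sgn (sympl v c) * trace (EM c * M) := calc
    trace (EM c * M) = trace (EM c * (EM v * M) * EM v) := by
      rw [hv.eq, mul_assoc, mul_assoc, EM_mul_self, mul_one]
    _ = trace ((EM v * EM c) * (EM v * M)) := by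
      rw [trace_mul_comm, ← mul_assoc, mul_assoc (EM v)]
    _ = sgn (sympl v c) * trace (EM c * M) := by
      rw [EM_mul_EM_comm, smul_mul_assoc, trace_smul, smul_eq_mul, mul_assoc, ← mul_assoc (EM v),
        EM_mul_self, one_mul]
  exact sgn_eq_one_iff.mp (mul_right_cancel₀ hc (by rw [one_mul]; exact hsign.symm))

lemma commute_EM_of_forall_mem_supp {M : Matrix (V m) (V m) ℂ} {v : V m × V m}
    (hM : ∀ c ∈ supp M, sympl c v = 0) : Commute M (EM v) := by
  have hN : ((2 ^ m : ℕ) : ℂ) ≠ 0 := by exact_mod_cast pow_ne_zero m two_ne_zero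
  refine smul_right_injective (Matrix (V m) (V m) ℂ) hN ?_
  have hterm : ∀ c,
      trace ((EM c)ᴴ * M) • (EM c * EM v) = trace ((EM c)ᴴ * M) • (EM v * EM c) := by
    intro c
    by_cases hc : c ∈ supp M
    · rw [EM_mul_EM_comm, hM c hc, sgn_zero, one_smul]
    · rw [mem_supp_iff, not_not] at hc
      rw [hc, zero_smul, zero_smul]
  show ((2 ^ m : ℕ) : ℂ) • (M * EM v) = ((2 ^ m : ℕ) : ℂ) • (EM v * M)
  calc ((2 ^ m : ℕ) : ℂ) • (M * EM v)
      = (∑ c, trace ((EM c)ᴴ * M) • EM c) * EM v := by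
        rw [sum_trace_conjTranspose_EM_mul_smul_EM, smul_mul_assoc]
    _ = ∑ c, trace ((EM c)ᴴ * M) • (EM c * EM v) := by
        simp_rw [Finset.sum_mul, smul_mul_assoc]
    _ = ∑ c, trace ((EM c)ᴴ * M) • (EM v * EM c) := Finset.sum_congr rfl fun c _ => hterm c
    _ = EM v * ∑ c, trace ((EM c)ᴴ * M) • EM c := by simp_rw [Finset.mul_sum, mul_smul_comm]
    _ = ((2 ^ m : ℕ) : ℂ) • (EM v * M) := by
        rw [sum_trace_conjTranspose_EM_mul_smul_EM, mul_smul_comm]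

end Pauli

open Pauli

theorem stmt13_general {m : ℕ} (C : Matrix (V m) (V m) ℂ)
    (hU : C ∈ Matrix.unitaryGroup (V m) ℂ)
    (J : Submodule (ZMod 2) (V m × V m))
    (hIso : ∀ u ∈ J, ∀ v ∈ J, sympl u v = 0)
    (hMax : ∀ w : V m × V m, (∀ v ∈ J, sympl w v = 0) → w ∈ J) :
    (∀ v ∈ J, C * EM v * Cᴴ = EM v) ↔ supp C ⊆ (J : Set (V m × V m)) := by
  have hconj : ∀ v, C * EM v * Cᴴ = EM v ↔ Commute C (EM v) := fun v =>
    (commute_unitary_iff_star_right_conjugate hU).symm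
  constructor
  · intro h c hc
    refine hMax c fun v hv => ?_
    rw [sympl_comm]
    exact sympl_eq_zero_of_commute_of_mem_supp ((hconj v).1 (h v hv)).symm hc
  · intro h v hv
    exact (hconj v).2 (commute_EM_of_forall_mem_supp fun c hc => hIso c (h hc) v hv)

/-- for a unitary `C` and a maximal commutative subgroup `S` of the Pauli
group — identified with a maximal isotropic subspace `J ⊆ F₂^{2m}` — `C` fixes `S`
pointwise (`C E(v) C† = E(v)` for all `v ∈ J`) iff `supp(C) ⊆ J`. -/
theorem stmt13 {m : ℕ} (hm : 1 ≤ m) (C : Matrix (V m) (V m) ℂ)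
    (hU : C ∈ Matrix.unitaryGroup (V m) ℂ)
    (J : Submodule (ZMod 2) (V m × V m))
    (hIso : ∀ u ∈ J, ∀ v ∈ J, sympl u v = 0)
    (hMax : ∀ w : V m × V m, (∀ v ∈ J, sympl w v = 0) → w ∈ J) :
    (∀ v ∈ J, C * EM v * Cᴴ = EM v) ↔ supp C ⊆ (J : Set (V m × V m)) :=
  stmt13_general C hU J hIso hMax
end
end

section
/- For every unitary C in the third level C^(3) of the Clifford hierarchy, there exists a nonzero c ∈ F_2^{2m} such that C E(c) C† is again an element of the Heisenberg–Weyl group (equal to a Pauli matrix E' E(c) for some Pauli E'). As a consequence, there exists a Clifford matrix G such that G·C commutes with some nontrivial Hermitian Pauli matrix. -/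
open Matrix
open scoped Classical

noncomputable section

/-!
For `c ∈ F_2^{2m}` the matrix `C E(c) C†` is a Hermitian Clifford, so conjugation by it permutes
the Paulis up to sign. Pulled back through `C`, this is an action of the 2-group `F_2^{2m}` on the
`4^m` Pauli labels fixing `0`; a 2-group acting on a set of even size with one fixed point has a
second one, `e ≠ 0`. Then `M = C† E(e) C` satisfies `E(c) M E(c) = ±M` for all `c`, the signs form
a character `c ↦ (-1)^⟨f, c⟩`, so `E(f) M` commutes with every Pauli and `M = ±E(f)`: that is,
`C E(f) C† = ±E(e)`. Finally, for `d` anticommuting with both `e` and `f`, the transvections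
`(E(u) + E(v))/√2` along `e → d` and `d → f` give a Clifford `G` with `G (±E(e)) G† = E(f)`, so
`G C` commutes with `E(f)`.
-/

lemma ZModModule.eq_add_iff_eq_add_s14 {G : Type*} [AddCommGroup G] [Module (ZMod 2) G] {u w a : G} :
    u = w + a ↔ w = u + a := by
  rw [← ZModModule.sub_eq_add, eq_sub_iff_add_eq, eq_comm]

lemma LinearMap.apply_eq_single_dotProduct {n R : Type*} [Fintype n] [DecidableEq n] [CommRing R]
    (L : (n → R) →ₗ[R] R) (x : n → R) : L x = (fun i => L (Pi.single i 1)) ⬝ᵥ x := by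
  rw [LinearMap.pi_apply_eq_sum_univ L x, dotProduct]
  refine Finset.sum_congr rfl fun i _ => ?_
  rw [smul_eq_mul, mul_comm]
  congr
  funext j
  simp [Pi.single_apply, eq_comm]

lemma exists_ne_forall_vadd_eq_self {A X : Type*} [AddGroup A] [AddAction A X] [Finite X] {p n : ℕ}
    [Fact p.Prime] (hA : Nat.card A = p ^ n) (hX : p ∣ Nat.card X) {x₀ : X}
    (hx₀ : ∀ a : A, a +ᵥ x₀ = x₀) : ∃ x, x ≠ x₀ ∧ ∀ a : A, a +ᵥ x = x := by
  have hG : IsPGroup p (Multiplicative A) := IsPGroup.of_card hA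
  obtain ⟨x, hx, hne⟩ :=
    hG.exists_fixed_point_of_prime_dvd_card_of_fixed_point X hX (a := x₀) fun a => hx₀ a.toAdd
  exact ⟨x, hne.symm, fun a => hx (Multiplicative.ofAdd a)⟩

lemma add_mul_mul_add_of_anticommute {R : Type*} [Ring R] [Algebra ℂ R] {A B X : R} {σ τ : ℂ}
    (hA : A * A = 1) (hB : B * B = 1) (hAB : B * A = -(A * B))
    (hAX : A * X = σ • (X * A)) (hBX : B * X = τ • (X * B)) :
    (A + B) * X * (A + B) = (σ + τ) • X + (σ - τ) • (X * (A * B)) := by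
  rw [add_mul, hAX, hBX, add_mul, smul_mul_assoc, smul_mul_assoc, mul_add, mul_add, mul_assoc X A A,
    hA, mul_assoc X B B, hB, mul_assoc X B A, hAB, mul_neg, mul_one, mul_assoc X A B]
  module

lemma mul_mul_conjTranspose_mul {n α : Type*} [Fintype n] [CommSemiring α] [StarRing α]
    (A B X : Matrix n n α) : A * B * X * (A * B)ᴴ = A * (B * X * Bᴴ) * Aᴴ := by
  rw [conjTranspose_mul]
  simp only [mul_assoc]

lemma conj_conjTranspose_conj_eq_self {n : Type*} [Fintype n] [DecidableEq n] {U : Matrix n n ℂ}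
    (hU : U ∈ unitaryGroup n ℂ) (X : Matrix n n ℂ) : U * (Uᴴ * X * U) * Uᴴ = X := by
  have hUU : U * Uᴴ = 1 := Unitary.mul_star_self_of_mem hU
  simp only [← mul_assoc, hUU, one_mul]
  rw [mul_assoc, hUU, mul_one]

lemma mul_comm_of_conj_eq {n : Type*} [Fintype n] [DecidableEq n] {U X : Matrix n n ℂ}
    (hU : U ∈ unitaryGroup n ℂ) (h : U * X * Uᴴ = X) : U * X = X * U := by
  have hUU : Uᴴ * U = 1 := Unitary.star_mul_self_of_mem hU
  calc U * X = U * X * Uᴴ * U := by rw [mul_assoc _ Uᴴ, hUU, mul_one]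
    _ = X * U := by rw [h]

def sgn (x : ZMod 2) : ℂ := (-1) ^ x.val

lemma sgn_zero : sgn 0 = 1 := rfl

lemma sgn_one : sgn 1 = -1 := by simp [sgn, ZMod.val_one]

lemma neg_one_pow_eq_sgn (n : ℕ) : (-1 : ℂ) ^ n = sgn n := by
  rw [sgn, ZMod.val_natCast, ← neg_one_pow_eq_pow_mod_two]

lemma sgn_add (x y : ZMod 2) : sgn (x + y) = sgn x * sgn y := by
  rw [sgn, ZMod.val_add, ← neg_one_pow_eq_pow_mod_two, pow_add, sgn, sgn]

lemma sgn_mul_self (x : ZMod 2) : sgn x * sgn x = 1 := by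
  rw [← sgn_add, CharTwo.add_self_eq_zero, sgn_zero]

lemma sgn_ne_zero (x : ZMod 2) : sgn x ≠ 0 := pow_ne_zero _ (by norm_num)

lemma sgn_injective : Function.Injective sgn := by
  intro x y h
  have cases : ∀ x : ZMod 2, x = 0 ∨ x = 1 := by decide
  rcases cases x with rfl | rfl <;> rcases cases y with rfl | rfl <;>
    first | rfl | norm_num [sgn_one, sgn_zero] at h

lemma star_sgn (x : ZMod 2) : star (sgn x) = sgn x := by simp [sgn]

lemma exists_sgn_eq_of_mul_self_eq_one {z : ℂ} (hz : z * z = 1) : ∃ s, sgn s = z := by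
  rcases mul_self_eq_one_iff.mp hz with rfl | rfl
  exacts [⟨0, sgn_zero⟩, ⟨1, sgn_one⟩]

lemma sgn_eq_I_pow (x : ZMod 2) : sgn x = Complex.I ^ (2 * x.val) := by
  rw [sgn, pow_mul, Complex.I_sq]

section Symplectic
variable {m : ℕ}

lemma sympl_eq (u v : V m × V m) : sympl u v = u.1 ⬝ᵥ v.2 + u.2 ⬝ᵥ v.1 := by
  simp only [sympl, dotProduct, Finset.sum_add_distrib]

lemma sympl_comm (u v : V m × V m) : sympl u v = sympl v u := by
  rw [sympl_eq, sympl_eq, dotProduct_comm u.1, dotProduct_comm u.2, add_comm]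

lemma sympl_add_right (g d d' : V m × V m) : sympl g (d + d') = sympl g d + sympl g d' := by
  simp only [sympl_eq, Prod.fst_add, Prod.snd_add, dotProduct_add]
  ring

lemma sympl_self (g : V m × V m) : sympl g g = 0 := by
  rw [sympl_eq, dotProduct_comm, CharTwo.add_self_eq_zero]

lemma sympl_zero_right (g : V m × V m) : sympl g 0 = 0 := by
  simp [sympl]

lemma exists_dotProduct_eq_one {x : V m} (hx : x ≠ 0) : ∃ b : V m, b ⬝ᵥ x = 1 := by
  obtain ⟨i, hi⟩ := Function.ne_iff.mp hx
  refine ⟨Pi.single i 1, ?_⟩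
  rw [single_dotProduct, one_mul]
  have eq_one_of_ne_zero : ∀ t : ZMod 2, t ≠ 0 → t = 1 := by decide
  exact eq_one_of_ne_zero _ hi

lemma exists_sympl_eq_one {g : V m × V m} (hg : g ≠ 0) : ∃ d, sympl g d = 1 := by
  by_cases h1 : g.1 = 0
  · obtain ⟨b, hb⟩ := exists_dotProduct_eq_one (fun h2 => hg (Prod.ext h1 h2))
    exact ⟨(b, 0), by rw [sympl_eq, dotProduct_zero, zero_add, dotProduct_comm, hb]⟩
  · obtain ⟨b, hb⟩ := exists_dotProduct_eq_one h1
    exact ⟨(0, b), by rw [sympl_eq, dotProduct_zero, add_zero, dotProduct_comm, hb]⟩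

lemma exists_sympl_eq_one_and_eq_one {e f : V m × V m} (he : e ≠ 0) (hf : f ≠ 0) :
    ∃ d, sympl e d = 1 ∧ sympl f d = 1 := by
  have eq_zero_of_ne_one : ∀ x : ZMod 2, x ≠ 1 → x = 0 := by decide
  obtain ⟨d₁, hd₁⟩ := exists_sympl_eq_one he
  obtain ⟨d₂, hd₂⟩ := exists_sympl_eq_one hf
  by_cases h₁ : sympl f d₁ = 1
  · exact ⟨d₁, hd₁, h₁⟩
  by_cases h₂ : sympl e d₂ = 1
  · exact ⟨d₂, h₂, hd₂⟩
  refine ⟨d₁ + d₂, ?_, ?_⟩ <;>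
    simp only [sympl_add_right, hd₁, hd₂, eq_zero_of_ne_one _ h₁, eq_zero_of_ne_one _ h₂,
      add_zero, zero_add]

lemma exists_sympl_eq (χ : (V m × V m) →+ ZMod 2) : ∃ f, ∀ c, χ c = sympl f c := by
  set L := χ.toZModLinearMap 2
  refine ⟨(fun i => χ (0, Pi.single i 1), fun i => χ (Pi.single i 1, 0)), fun c => ?_⟩
  have hc : c = (c.1, 0) + (0, c.2) := by simp
  conv_lhs => rw [hc, map_add, add_comm]
  rw [sympl_eq]
  congr 1
  · exact (L ∘ₗ LinearMap.inr _ _ _).apply_eq_single_dotProduct c.2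
  · exact (L ∘ₗ LinearMap.inl _ _ _).apply_eq_single_dotProduct c.1

end Symplectic

section Pauli
variable {m : ℕ}

lemma dotN_cast (a b : V m) : (dotN a b : ZMod 2) = a ⬝ᵥ b := by
  simp [dotN, dotProduct]

lemma DM_apply (a b u v : V m) : DM a b u v = if u = v + a then sgn (b ⬝ᵥ v) else 0 := by
  rw [DM, of_apply, neg_one_pow_eq_sgn, dotN_cast]

lemma mul_DM_apply (M : Matrix (V m) (V m) ℂ) (a b u v : V m) :
    (M * DM a b) u v = M u (v + a) * sgn (b ⬝ᵥ v) := by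
  rw [mul_apply, Finset.sum_eq_single (v + a)]
  · simp [DM_apply]
  · intro w _ hw
    simp [DM_apply, hw]
  · simp

lemma DM_mul_apply (M : Matrix (V m) (V m) ℂ) (a b u v : V m) :
    (DM a b * M) u v = sgn (b ⬝ᵥ (u + a)) * M (u + a) v := by
  rw [mul_apply, Finset.sum_eq_single (u + a)]
  · simp [DM_apply, ZModModule.eq_add_iff_eq_add_s14]
  · intro w _ hw
    simp [DM_apply, ZModModule.eq_add_iff_eq_add_s14, hw]
  · simp

lemma DM_mul_DM (a b a' b' : V m) :
    DM a b * DM a' b' = sgn (b ⬝ᵥ a') • DM (a + a') (b + b') := by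
  ext u v
  rw [DM_mul_apply, Matrix.smul_apply, DM_apply, DM_apply, smul_eq_mul]
  by_cases h : u = v + (a + a')
  · have h' : u + a = v + a' := by
      rw [h, add_comm a a', ← add_assoc, add_assoc, ZModModule.add_self, add_zero]
    rw [if_pos h', if_pos h, h', dotProduct_add, add_dotProduct, sgn_add, sgn_add]
    ring
  · rw [if_neg, if_neg h, mul_zero, mul_zero]
    rintro h'
    exact h (by rw [add_comm a, ← add_assoc, ← ZModModule.eq_add_iff_eq_add_s14.mpr h'.symm])

lemma DM_zero_zero : DM (0 : V m) 0 = 1 := by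
  ext u v
  simp [DM_apply, one_apply, sgn_zero]

lemma conjTranspose_DM (a b : V m) : (DM a b)ᴴ = sgn (a ⬝ᵥ b) • DM a b := by
  ext u v
  rw [conjTranspose_apply, Matrix.smul_apply, DM_apply, DM_apply, smul_eq_mul]
  by_cases h : u = v + a
  · rw [if_pos (ZModModule.eq_add_iff_eq_add_s14.mp h), if_pos h, star_sgn, h, dotProduct_add,
      sgn_add, dotProduct_comm b a, mul_comm]
  · rw [if_neg (mt ZModModule.eq_add_iff_eq_add_s14.mpr h), if_neg h, star_zero, mul_zero]

lemma EM_apply (c : V m × V m) (u v : V m) :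
    EM c u v = if u = v + c.1 then Complex.I ^ dotN c.1 c.2 * sgn (c.2 ⬝ᵥ v) else 0 := by
  rw [EM, Matrix.smul_apply, DM_apply, smul_eq_mul, mul_ite, mul_zero]

lemma EM_zero : EM (0 : V m × V m) = 1 := by
  simp [EM, dotN, DM_zero_zero]

lemma EM_mul_self (c : V m × V m) : EM c * EM c = 1 := by
  rw [EM, smul_mul_smul_comm, DM_mul_DM, ZModModule.add_self, ZModModule.add_self,
    DM_zero_zero, smul_smul, ← mul_pow, Complex.I_mul_I, neg_one_pow_eq_sgn, dotN_cast,
    dotProduct_comm, sgn_mul_self, one_smul]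

lemma EM_ne_zero (c : V m × V m) : EM c ≠ 0 := fun h =>
  one_ne_zero ((EM_mul_self c).symm.trans (by rw [h, zero_mul]))

lemma conjTranspose_EM (c : V m × V m) : (EM c)ᴴ = EM c := by
  rw [EM, conjTranspose_smul, conjTranspose_DM, smul_smul, star_pow, Complex.star_def,
    Complex.conj_I, ← dotN_cast, ← neg_one_pow_eq_sgn, ← mul_pow, mul_neg_one, neg_neg]

lemma EM_mul_EM_comm (c d : V m × V m) :
    EM c * EM d = sgn (sympl c d) • (EM d * EM c) := by
  simp only [EM, smul_mul_smul_comm, DM_mul_DM, smul_smul, add_comm d.1, add_comm d.2]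
  congr 1
  rw [sympl_eq, dotProduct_comm c.1, sgn_add]
  linear_combination (-sgn (c.2 ⬝ᵥ d.1) * Complex.I ^ dotN c.1 c.2 * Complex.I ^ dotN d.1 d.2) *
    sgn_mul_self (d.2 ⬝ᵥ c.1)

lemma eq_of_smul_EM_eq_smul_EM {g g' : V m × V m} {z w : ℂ} (h : z • EM g = w • EM g')
    (hz : z ≠ 0) : g = g' ∧ z = w := by
  have entry (v : V m) := congrFun₂ h (v + g.1) v
  simp only [Matrix.smul_apply, EM_apply, if_pos, smul_eq_mul] at entry
  have hz' : z * Complex.I ^ dotN g.1 g.2 ≠ 0 := mul_ne_zero hz (pow_ne_zero _ Complex.I_ne_zero)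
  have h1 : g.1 = g'.1 := by
    by_contra hne
    have := entry 0
    rw [zero_add, if_neg (by simpa using hne), mul_zero, dotProduct_zero, sgn_zero, mul_one] at this
    exact hz' (by simpa using this)
  have entry' (v : V m) : z * Complex.I ^ dotN g.1 g.2 * sgn (g.2 ⬝ᵥ v) =
      w * Complex.I ^ dotN g'.1 g'.2 * sgn (g'.2 ⬝ᵥ v) := by
    simpa [h1, mul_assoc] using entry v
  have h0 : z * Complex.I ^ dotN g.1 g.2 = w * Complex.I ^ dotN g'.1 g'.2 := by
    simpa [sgn_zero] using entry' 0
  have h2 : g.2 = g'.2 := by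
    funext i
    have := entry' (Pi.single i 1)
    rw [h0] at this
    simpa [dotProduct_single] using sgn_injective (mul_left_cancel₀ (h0 ▸ hz') this)
  obtain rfl : g = g' := Prod.ext h1 h2
  exact ⟨rfl, mul_right_cancel₀ (pow_ne_zero _ Complex.I_ne_zero) h0⟩

end Pauli

section HeisenbergWeyl
variable {m : ℕ}

lemma I_pow_mod_four (n : ℕ) : Complex.I ^ (n % 4) = Complex.I ^ n := by
  conv_rhs => rw [← Nat.mod_add_div n 4, pow_add, pow_mul, Complex.I_pow_four, one_pow, mul_one]

lemma I_pow_mul_star (k : ℕ) : Complex.I ^ k * star (Complex.I ^ k) = 1 := by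
  rw [star_pow, Complex.star_def, Complex.conj_I, ← mul_pow, mul_neg, Complex.I_mul_I, neg_neg,
    one_pow]

lemma DM_eq_smul_EM (a b : V m) : DM a b = Complex.I ^ (3 * dotN a b) • EM (a, b) := by
  rw [EM, smul_smul, ← pow_add, show 3 * dotN a b + dotN a b = 4 * dotN a b by ring, pow_mul,
    Complex.I_pow_four, one_pow, one_smul]

lemma mem_HW_iff {M : Matrix (V m) (V m) ℂ} :
    M ∈ HW m ↔ ∃ (k : ℕ) (g : V m × V m), M = Complex.I ^ k • EM g := by
  constructor
  · rintro ⟨k, a, b, rfl⟩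
    exact ⟨k + 3 * dotN a b, (a, b), by rw [DM_eq_smul_EM, smul_smul, pow_add]⟩
  · rintro ⟨k, g, rfl⟩
    refine ⟨⟨(k + dotN g.1 g.2) % 4, Nat.mod_lt _ (by norm_num)⟩, g.1, g.2, ?_⟩
    rw [Fin.val_mk, I_pow_mod_four, pow_add, ← smul_smul, EM]

lemma EM_mem_HW (c : V m × V m) : EM c ∈ HW m :=
  mem_HW_iff.mpr ⟨0, c, by rw [pow_zero, one_smul]⟩

lemma I_pow_smul_mem_HW (k : ℕ) {M : Matrix (V m) (V m) ℂ} (hM : M ∈ HW m) :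
    Complex.I ^ k • M ∈ HW m := by
  obtain ⟨j, g, rfl⟩ := mem_HW_iff.mp hM
  exact mem_HW_iff.mpr ⟨k + j, g, by rw [smul_smul, pow_add]⟩

lemma sgn_smul_mem_HW (s : ZMod 2) {M : Matrix (V m) (V m) ℂ} (hM : M ∈ HW m) :
    sgn s • M ∈ HW m := by
  rw [sgn_eq_I_pow]
  exact I_pow_smul_mem_HW _ hM

lemma exists_EM_mul_EM_eq_smul (c d : V m × V m) :
    ∃ k : ℕ, EM c * EM d = Complex.I ^ k • EM (c + d) := by
  refine ⟨dotN c.1 c.2 + dotN d.1 d.2 + 2 * (c.2 ⬝ᵥ d.1).val +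
    3 * dotN (c.1 + d.1) (c.2 + d.2), ?_⟩
  rw [EM, EM, smul_mul_smul_comm, DM_mul_DM, DM_eq_smul_EM, sgn_eq_I_pow, smul_smul, smul_smul,
    ← pow_add, ← pow_add, ← pow_add]
  rfl

lemma mul_mem_HW {M M' : Matrix (V m) (V m) ℂ} (hM : M ∈ HW m) (hM' : M' ∈ HW m) :
    M * M' ∈ HW m := by
  obtain ⟨k, g, rfl⟩ := mem_HW_iff.mp hM
  obtain ⟨k', g', rfl⟩ := mem_HW_iff.mp hM'
  obtain ⟨j, hj⟩ := exists_EM_mul_EM_eq_smul g g'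
  rw [smul_mul_smul_comm, hj, ← pow_add]
  exact I_pow_smul_mem_HW _ (I_pow_smul_mem_HW _ (EM_mem_HW _))

lemma exists_eq_sgn_smul_EM_of_isHermitian {M : Matrix (V m) (V m) ℂ} (hM : M ∈ HW m)
    (hMh : M.IsHermitian) : ∃ s g, M = sgn s • EM g := by
  obtain ⟨k, g, rfl⟩ := mem_HW_iff.mp hM
  have hstar : star (Complex.I ^ k) = Complex.I ^ k := by
    have h := hMh.eq
    rw [conjTranspose_smul, conjTranspose_EM] at h
    exact (eq_of_smul_EM_eq_smul_EM h (star_ne_zero.mpr (pow_ne_zero _ Complex.I_ne_zero))).2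
  obtain ⟨s, hs⟩ := exists_sgn_eq_of_mul_self_eq_one (hstar ▸ I_pow_mul_star k)
  exact ⟨s, g, by rw [hs]⟩

end HeisenbergWeyl

section Conjugation
variable {m : ℕ}

lemma EM_add_mul_mul_EM_add (c d : V m × V m) (Y : Matrix (V m) (V m) ℂ) :
    EM (c + d) * Y * EM (c + d) = EM c * (EM d * Y * EM d) * EM c := by
  obtain ⟨k, hk⟩ := exists_EM_mul_EM_eq_smul c d
  have hk' : EM d * EM c = star (Complex.I ^ k) • EM (c + d) := by
    rw [← conjTranspose_EM c, ← conjTranspose_EM d, ← conjTranspose_mul, hk, conjTranspose_smul,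
      conjTranspose_EM]
  calc EM (c + d) * Y * EM (c + d)
      = (Complex.I ^ k * star (Complex.I ^ k)) • (EM (c + d) * Y * EM (c + d)) := by
        rw [I_pow_mul_star, one_smul]
    _ = (EM c * EM d) * Y * (EM d * EM c) := by
        rw [hk, hk', mul_smul_comm, smul_mul_assoc, smul_mul_assoc, smul_smul, mul_comm (star _)]
    _ = EM c * (EM d * Y * EM d) * EM c := by simp only [mul_assoc]

lemma eq_smul_one_of_forall_commute_EM {W : Matrix (V m) (V m) ℂ}
    (h : ∀ c, W * EM c = EM c * W) : W = W 0 0 • 1 := by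
  have hDM (a b : V m) : W * DM a b = DM a b * W := by
    have := h (a, b)
    rw [EM, mul_smul_comm, smul_mul_assoc] at this
    exact smul_right_injective _ (pow_ne_zero _ Complex.I_ne_zero) this
  -- Commuting with the diagonal `DM 0 b` kills the off-diagonal entries; commuting with the
  -- translations `DM a 0` makes the diagonal constant.
  have hZ (b u v : V m) : W u v * sgn (b ⬝ᵥ v) = sgn (b ⬝ᵥ u) * W u v := by
    simpa [mul_DM_apply, DM_mul_apply] using congrFun₂ (hDM 0 b) u v
  have hX (a u v : V m) : W u (v + a) = W (u + a) v := by
    simpa [mul_DM_apply, DM_mul_apply, sgn_zero] using congrFun₂ (hDM a 0) u v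
  ext u v
  by_cases huv : u = v
  · subst huv
    have := hX u 0 u
    rw [zero_add, ZModModule.add_self] at this
    simp [this]
  · obtain ⟨b, hb⟩ := exists_dotProduct_eq_one (sub_ne_zero.mpr huv)
    have hbu : b ⬝ᵥ u = 1 + b ⬝ᵥ v := by rw [← hb, dotProduct_sub, sub_add_cancel]
    have := hZ b u v
    rw [hbu, sgn_add, sgn_one] at this
    have hW : W u v = 0 := by
      linear_combination (sgn (b ⬝ᵥ v) / 2) * this - W u v * sgn_mul_self (b ⬝ᵥ v)
    simp [one_apply_ne huv, hW]

lemma exists_eq_smul_EM_of_forall_EM_conj {M : Matrix (V m) (V m) ℂ} (hM : M ≠ 0)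
    (h : ∀ c, ∃ s, EM c * M * EM c = sgn s • M) : ∃ (f : V m × V m) (z : ℂ), M = z • EM f := by
  choose t ht using h
  have t_add (c d : V m × V m) : t (c + d) = t c + t d := by
    apply sgn_injective
    apply smul_left_injective ℂ hM
    simp only
    rw [← ht, EM_add_mul_mul_EM_add, ht, mul_smul_comm, smul_mul_assoc, ht, smul_smul, sgn_add,
      mul_comm]
  obtain ⟨f, hf⟩ := exists_sympl_eq (AddMonoidHom.mk' t t_add)
  have hcomm (c : V m × V m) : EM f * M * EM c = EM c * (EM f * M) := by
    have hMc : M * EM c = sgn (sympl f c) • (EM c * M) := by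
      rw [← hf, AddMonoidHom.mk'_apply, ← mul_smul_comm, ← ht, ← mul_assoc, ← mul_assoc,
        EM_mul_self, one_mul]
    calc EM f * M * EM c = sgn (sympl f c) • (EM f * EM c * M) := by
          rw [mul_assoc, hMc, mul_smul_comm, mul_assoc]
      _ = EM c * (EM f * M) := by
          rw [EM_mul_EM_comm f c, smul_mul_assoc, smul_smul, sgn_mul_self, one_smul, mul_assoc]
  refine ⟨f, (EM f * M) 0 0, ?_⟩
  calc M = EM f * (EM f * M) := by rw [← mul_assoc, EM_mul_self, one_mul]
    _ = EM f * ((EM f * M) 0 0 • 1) := by rw [← eq_smul_one_of_forall_commute_EM hcomm]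
    _ = (EM f * M) 0 0 • EM f := by rw [mul_smul_comm, mul_one]

end Conjugation

section ThirdLevel
variable {m : ℕ} {C : Matrix (V m) (V m) ℂ}

lemma conjTranspose_mul_conj_EM_mul (hC : C ∈ unitaryGroup (V m) ℂ) (c : V m × V m)
    (X : Matrix (V m) (V m) ℂ) :
    Cᴴ * (C * EM c * Cᴴ * X * (C * EM c * Cᴴ)ᴴ) * C = EM c * (Cᴴ * X * C) * EM c := by
  have h : Cᴴ * C = 1 := Unitary.star_mul_self_of_mem hC
  rw [conjTranspose_mul, conjTranspose_mul, conjTranspose_conjTranspose, conjTranspose_EM]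
  simp only [mul_assoc]
  rw [← mul_assoc Cᴴ C, h, one_mul, mul_one]

lemma eq_of_smul_conj_EM_eq (hC : C ∈ unitaryGroup (V m) ℂ) {g g' : V m × V m} {z w : ℂ}
    (h : z • (Cᴴ * EM g * C) = w • (Cᴴ * EM g' * C)) (hz : z ≠ 0) : g = g' := by
  have hconj := congrArg (fun X => C * X * Cᴴ) h
  simp only [mul_smul_comm, smul_mul_assoc, conj_conjTranspose_conj_eq_self hC] at hconj
  exact (eq_of_smul_EM_eq_smul_EM hconj hz).1

lemma exists_EM_conj_conj_eq (hC : C ∈ CH m 2) (c e : V m × V m) :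
    ∃ s g, EM c * (Cᴴ * EM e * C) * EM c = sgn s • (Cᴴ * EM g * C) := by
  obtain ⟨hCu, hC2⟩ := hC
  have hG : C * EM c * Cᴴ * EM e * (C * EM c * Cᴴ)ᴴ ∈ HW m :=
    (hC2 _ (EM_mem_HW c)).2 _ (EM_mem_HW e)
  obtain ⟨s, g, hsg⟩ := exists_eq_sgn_smul_EM_of_isHermitian hG
    (isHermitian_mul_mul_conjTranspose _ (conjTranspose_EM e))
  refine ⟨s, g, ?_⟩
  rw [← conjTranspose_mul_conj_EM_mul hCu, hsg, mul_smul_comm, smul_mul_assoc]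

lemma exists_ne_zero_forall_EM_conj_eq_sgn_smul (hm : 1 ≤ m) (hC : C ∈ CH m 2) :
    ∃ e ≠ 0, ∀ c, ∃ s, EM c * (Cᴴ * EM e * C) * EM c = sgn s • (Cᴴ * EM e * C) := by
  have hCu : C ∈ unitaryGroup (V m) ℂ := hC.1
  have hCC : Cᴴ * C = 1 := Unitary.star_mul_self_of_mem hCu
  choose s Φ hΦ using exists_EM_conj_conj_eq hC
  let _ : AddAction (V m × V m) (V m × V m) :=
    { vadd := Φ
      zero_vadd := fun e => by
        change Φ 0 e = e
        refine (eq_of_smul_conj_EM_eq hCu (w := sgn (s 0 e)) ?_ one_ne_zero).symm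
        rw [← hΦ, EM_zero, one_mul, mul_one, one_smul]
      add_vadd := fun c d e => by
        change Φ (c + d) e = Φ c (Φ d e)
        refine eq_of_smul_conj_EM_eq hCu (z := sgn (s (c + d) e))
          (w := sgn (s c (Φ d e)) * sgn (s d e)) ?_ (sgn_ne_zero _)
        rw [← hΦ, EM_add_mul_mul_EM_add, hΦ, mul_smul_comm, smul_mul_assoc, hΦ, smul_smul,
          mul_comm] }
  have hcard : Nat.card (V m × V m) = 2 ^ (2 * m) := by
    simp [Nat.card_eq_fintype_card, ← pow_add, two_mul]
  obtain ⟨e, he, hfix⟩ := exists_ne_forall_vadd_eq_self (A := V m × V m) hcard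
    (hcard ▸ dvd_pow_self 2 (by omega)) (x₀ := 0) fun c => by
      change Φ c 0 = 0
      refine (eq_of_smul_conj_EM_eq hCu (w := sgn (s c 0)) ?_ one_ne_zero).symm
      rw [← hΦ, EM_zero, mul_one, hCC, mul_one, EM_mul_self, one_smul]
  have hfix' : ∀ c, Φ c e = e := hfix
  exact ⟨e, he, fun c => ⟨s c e, by rw [hΦ, hfix']⟩⟩

lemma exists_conj_EM_eq_sgn_smul_EM (hm : 1 ≤ m) (hC : C ∈ CH m 2) :
    ∃ e f s, e ≠ 0 ∧ f ≠ 0 ∧ C * EM f * Cᴴ = sgn s • EM e := by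
  have hCC : Cᴴ * C = 1 := Unitary.star_mul_self_of_mem hC.1
  have hCC' : C * Cᴴ = 1 := Unitary.mul_star_self_of_mem hC.1
  have conj_cancel := conj_conjTranspose_conj_eq_self hC.1
  obtain ⟨e, he, hconj⟩ := exists_ne_zero_forall_EM_conj_eq_sgn_smul hm hC
  have hM : Cᴴ * EM e * C ≠ 0 := fun h =>
    EM_ne_zero e (by rw [← conj_cancel (EM e), h, mul_zero, zero_mul])
  obtain ⟨f, z, hfz⟩ := exists_eq_smul_EM_of_forall_EM_conj hM hconj
  have hz : z * z = 1 := by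
    have hsq : (Cᴴ * EM e * C) * (Cᴴ * EM e * C) = 1 := by
      simp only [mul_assoc]
      rw [← mul_assoc C Cᴴ, hCC', one_mul, ← mul_assoc (EM e), EM_mul_self, one_mul, hCC]
    rw [hfz, smul_mul_smul_comm, EM_mul_self, ← EM_zero] at hsq
    exact (eq_of_smul_EM_eq_smul_EM ((one_smul ℂ _).trans hsq.symm) one_ne_zero).2.symm
  obtain ⟨s, rfl⟩ := exists_sgn_eq_of_mul_self_eq_one hz
  have hEe : EM e = sgn s • (C * EM f * Cᴴ) := by
    rw [← conj_cancel (EM e), hfz, mul_smul_comm, smul_mul_assoc]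
  refine ⟨e, f, s, he, ?_, ?_⟩
  · rintro rfl
    rw [EM_zero, mul_one, hCC', ← EM_zero, ← one_smul ℂ (EM e)] at hEe
    exact he (eq_of_smul_EM_eq_smul_EM hEe one_ne_zero).1
  · rw [hEe, smul_smul, sgn_mul_self, one_smul]

end ThirdLevel

section Transvection
variable {m : ℕ}

lemma IsClifford.mul {G G' : Matrix (V m) (V m) ℂ} (hG : IsClifford G) (hG' : IsClifford G') :
    IsClifford (G * G') :=
  ⟨mul_mem hG.1 hG'.1, fun W hW => by
    rw [mul_mul_conjTranspose_mul]
    exact hG.2 _ (hG'.2 W hW)⟩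

def cliffordTransvection (u v : V m × V m) (s : ZMod 2) : Matrix (V m) (V m) ℂ :=
  ((Real.sqrt 2 : ℂ))⁻¹ • (sgn s • EM u + EM v)

lemma inv_sqrt_two_mul_self : ((Real.sqrt 2 : ℂ))⁻¹ * ((Real.sqrt 2 : ℂ))⁻¹ = 2⁻¹ := by
  rw [← mul_inv, ← Complex.ofReal_mul, Real.mul_self_sqrt zero_le_two, Complex.ofReal_ofNat]

lemma conjTranspose_cliffordTransvection (u v : V m × V m) (s : ZMod 2) :
    (cliffordTransvection u v s)ᴴ = cliffordTransvection u v s := by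
  rw [cliffordTransvection, conjTranspose_smul, conjTranspose_add, conjTranspose_smul,
    conjTranspose_EM, conjTranspose_EM, star_sgn, star_inv₀, Complex.star_def, Complex.conj_ofReal]

lemma sgn_smul_EM_mul_EM (s : ZMod 2) (u g : V m × V m) :
    (sgn s • EM u) * EM g = sgn (sympl u g) • (EM g * (sgn s • EM u)) := by
  rw [smul_mul_assoc, EM_mul_EM_comm, mul_smul_comm, smul_comm]

lemma cliffordTransvection_conj_EM {u v : V m × V m} (huv : sympl u v = 1) (s : ZMod 2)
    (g : V m × V m) :
    cliffordTransvection u v s * EM g * (cliffordTransvection u v s)ᴴ =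
      (2⁻¹ : ℂ) • ((sgn (sympl u g) + sgn (sympl v g)) • EM g +
        (sgn (sympl u g) - sgn (sympl v g)) • (EM g * (sgn s • EM u * EM v))) := by
  have hA : (sgn s • EM u) * (sgn s • EM u) = 1 := by
    rw [smul_mul_smul_comm, sgn_mul_self, EM_mul_self, one_smul]
  have hAB : EM v * (sgn s • EM u) = -(sgn s • EM u * EM v) := by
    rw [mul_smul_comm, EM_mul_EM_comm, sympl_comm, huv, sgn_one, smul_comm, neg_one_smul,
      smul_mul_assoc]
  rw [conjTranspose_cliffordTransvection, cliffordTransvection, smul_mul_assoc, smul_mul_assoc,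
    mul_smul_comm, smul_smul, inv_sqrt_two_mul_self, add_mul_mul_add_of_anticommute hA
    (EM_mul_self v) hAB (sgn_smul_EM_mul_EM s u g) (EM_mul_EM_comm v g)]

lemma cliffordTransvection_conj_sgn_smul_EM {u v : V m × V m} (huv : sympl u v = 1)
    (s : ZMod 2) :
    cliffordTransvection u v s * (sgn s • EM u) * (cliffordTransvection u v s)ᴴ = EM v := by
  rw [mul_smul_comm, smul_mul_assoc, cliffordTransvection_conj_EM huv, sympl_self, sympl_comm,
    huv, sgn_zero, sgn_one, smul_mul_assoc, mul_smul_comm, ← mul_assoc, EM_mul_self, one_mul]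
  linear_combination (norm := module) sgn_mul_self s • EM v

lemma cliffordTransvection_mem_unitaryGroup {u v : V m × V m} (huv : sympl u v = 1)
    (s : ZMod 2) : cliffordTransvection u v s ∈ unitaryGroup (V m) ℂ := by
  have h := cliffordTransvection_conj_EM huv s 0
  rw [EM_zero, mul_one, sympl_zero_right, sympl_zero_right, sgn_zero] at h
  rw [mem_unitaryGroup_iff, star_eq_conjTranspose, h]
  module

lemma cliffordTransvection_conj_EM_mem_HW {u v : V m × V m} (huv : sympl u v = 1) (s : ZMod 2)
    (g : V m × V m) :
    cliffordTransvection u v s * EM g * (cliffordTransvection u v s)ᴴ ∈ HW m := by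
  rw [cliffordTransvection_conj_EM huv]
  have hprod : EM g * (sgn s • EM u * EM v) ∈ HW m :=
    mul_mem_HW (EM_mem_HW g) (mul_mem_HW (sgn_smul_mem_HW s (EM_mem_HW u)) (EM_mem_HW v))
  have two_cases : ∀ x y : ZMod 2, y = x ∨ y = x + 1 := by decide
  rcases two_cases (sympl u g) (sympl v g) with h | h <;> rw [h]
  · convert sgn_smul_mem_HW (sympl u g) (EM_mem_HW g) using 1
    module
  · convert sgn_smul_mem_HW (sympl u g) hprod using 1
    rw [sgn_add, sgn_one]
    module

lemma isClifford_cliffordTransvection {u v : V m × V m} (huv : sympl u v = 1) (s : ZMod 2) :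
    IsClifford (cliffordTransvection u v s) := by
  refine ⟨cliffordTransvection_mem_unitaryGroup huv s, fun W hW => ?_⟩
  obtain ⟨k, g, rfl⟩ := mem_HW_iff.mp hW
  rw [mul_smul_comm, smul_mul_assoc]
  exact I_pow_smul_mem_HW k (cliffordTransvection_conj_EM_mem_HW huv s g)

lemma exists_isClifford_conj_eq {e f : V m × V m} (he : e ≠ 0) (hf : f ≠ 0) (s : ZMod 2) :
    ∃ G, IsClifford G ∧ G * (sgn s • EM e) * Gᴴ = EM f := by
  obtain ⟨d, hed, hfd⟩ := exists_sympl_eq_one_and_eq_one he hf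
  have hdf : sympl d f = 1 := by rw [sympl_comm, hfd]
  refine ⟨cliffordTransvection d f 0 * cliffordTransvection e d s,
    (isClifford_cliffordTransvection hdf 0).mul (isClifford_cliffordTransvection hed s), ?_⟩
  rw [mul_mul_conjTranspose_mul, cliffordTransvection_conj_sgn_smul_EM hed, ← one_smul ℂ (EM d),
    ← sgn_zero, cliffordTransvection_conj_sgn_smul_EM hdf]

end Transvection

/-- every `C ∈ C^(3)` maps some nontrivial Pauli to a Pauli under
conjugation; consequently there is a Clifford `G` such that `G·C` commutes with some
nontrivial Hermitian Pauli.  (Here `CH m 2 = C^(3)`.) -/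
theorem stmt14 {m : ℕ} (hm : 1 ≤ m) (C : Matrix (V m) (V m) ℂ) (hC : C ∈ CH m 2) :
    (∃ c : V m × V m, c ≠ 0 ∧ C * EM c * Cᴴ ∈ HW m) ∧
    ∃ G : Matrix (V m) (V m) ℂ, IsClifford G ∧
      ∃ c : V m × V m, c ≠ 0 ∧ (G * C) * EM c = EM c * (G * C) := by
  obtain ⟨e, f, s, he, hf, hCf⟩ := exists_conj_EM_eq_sgn_smul_EM hm hC
  obtain ⟨G, hG, hGe⟩ := exists_isClifford_conj_eq he hf s
  refine ⟨⟨f, hf, hCf ▸ sgn_smul_mem_HW s (EM_mem_HW e)⟩, G, hG, f, hf, ?_⟩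
  apply mul_comm_of_conj_eq (mul_mem hG.1 hC.1)
  rw [mul_mul_conjTranspose_mul, hCf, hGe]
end
end
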